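/- Let (X,F,μ) and (Y,G,ν) be probability spaces and H = ∪ₙ Rₙ where each Rₙ belongs to the field generated by the measurable rectangles A×B (A∈F, B∈G). Then α*(1_H) = β*(1_H): sup over couplings of P(H) equals the infimum of μ(f)+ν(g) over integrable f,g with f(x)+g(y) ≥ 1_H(x,y). -/

import Mathlib

open MeasureTheory Filter Topology

noncomputable section

variable {X Y : Type*}

/-- `P` is a coupling of `μ` and `ν`: a probability measure on the product
σ-field with marginals `μ` and `ν`. -/
def IsCoupling [MeasurableSpace X] [MeasurableSpace Y]
    (μ : Measure X) (ν : Measure Y) (P : Measure (X × Y)) : Prop :=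
  IsProbabilityMeasure P ∧ P.map Prod.fst = μ ∧ P.map Prod.snd = ν

/-- Values `∫ c dP` as `P` ranges over the couplings of `μ` and `ν`. -/
def primalSet [MeasurableSpace X] [MeasurableSpace Y]
    (μ : Measure X) (ν : Measure Y) (c : X × Y → ℝ) : Set ℝ :=
  {r | ∃ P : Measure (X × Y), IsCoupling μ ν P ∧ r = ∫ z, c z ∂P}

/-- `α(c) = inf_{P ∈ Γ(μ,ν)} ∫ c dP`. -/
def alphaInf [MeasurableSpace X] [MeasurableSpace Y]
    (μ : Measure X) (ν : Measure Y) (c : X × Y → ℝ) : ℝ :=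
  sInf (primalSet μ ν c)

/-- `α*(c) = sup_{P ∈ Γ(μ,ν)} ∫ c dP`. -/
def alphaSup [MeasurableSpace X] [MeasurableSpace Y]
    (μ : Measure X) (ν : Measure Y) (c : X × Y → ℝ) : ℝ :=
  sSup (primalSet μ ν c)

/-- Values `μ(f) + ν(g)` with `f ∈ L¹(μ)`, `g ∈ L¹(ν)` and `f + g ≤ c` pointwise. -/
def dualLowerSet [MeasurableSpace X] [MeasurableSpace Y]
    (μ : Measure X) (ν : Measure Y) (c : X × Y → ℝ) : Set ℝ :=
  {r | ∃ (f : X → ℝ) (g : Y → ℝ), Integrable f μ ∧ Integrable g ν ∧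
    (∀ x y, f x + g y ≤ c (x, y)) ∧ r = ∫ x, f x ∂μ + ∫ y, g y ∂ν}

/-- Values `μ(f) + ν(g)` with `f ∈ L¹(μ)`, `g ∈ L¹(ν)` and `f + g ≥ c` pointwise. -/
def dualUpperSet [MeasurableSpace X] [MeasurableSpace Y]
    (μ : Measure X) (ν : Measure Y) (c : X × Y → ℝ) : Set ℝ :=
  {r | ∃ (f : X → ℝ) (g : Y → ℝ), Integrable f μ ∧ Integrable g ν ∧
    (∀ x y, c (x, y) ≤ f x + g y) ∧ r = ∫ x, f x ∂μ + ∫ y, g y ∂ν}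

/-- `β(c) = sup {μ(f)+ν(g) : f + g ≤ c}`. -/
def betaSup [MeasurableSpace X] [MeasurableSpace Y]
    (μ : Measure X) (ν : Measure Y) (c : X × Y → ℝ) : ℝ :=
  sSup (dualLowerSet μ ν c)

/-- `β*(c) = inf {μ(f)+ν(g) : f + g ≥ c}`. -/
def betaInf [MeasurableSpace X] [MeasurableSpace Y]
    (μ : Measure X) (ν : Measure Y) (c : X × Y → ℝ) : ℝ :=
  sInf (dualUpperSet μ ν c)

/-- Condition (1.1): `f₁ + g₁ ≤ c ≤ f₂ + g₂` with `f₁, f₂ ∈ L¹(μ)`, `g₁, g₂ ∈ L¹(ν)`. -/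
def HasIntegrableBounds [MeasurableSpace X] [MeasurableSpace Y]
    (μ : Measure X) (ν : Measure Y) (c : X × Y → ℝ) : Prop :=
  ∃ (f₁ f₂ : X → ℝ) (g₁ g₂ : Y → ℝ), Integrable f₁ μ ∧ Integrable f₂ μ ∧
    Integrable g₁ ν ∧ Integrable g₂ ν ∧
    ∀ x y, f₁ x + g₁ y ≤ c (x, y) ∧ c (x, y) ≤ f₂ x + g₂ y

/-- Real-valued indicator of a set. -/
def indR (H : Set (X × Y)) : X × Y → ℝ := H.indicator fun _ => (1 : ℝ)

/-- `R` is a finite union of measurable rectangles, i.e. an element of the ring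
generated by the measurable rectangles. -/
def IsRectUnion [MeasurableSpace X] [MeasurableSpace Y] (R : Set (X × Y)) : Prop :=
  ∃ (n : ℕ) (A : Fin n → Set X) (B : Fin n → Set Y),
    (∀ i, MeasurableSet (A i)) ∧ (∀ i, MeasurableSet (B i)) ∧ R = ⋃ i, A i ×ˢ B i

/-!
Weak duality gives `α* ≤ β*`. For the converse write `H` as the increasing union of the finite
unions of rectangles `H_N = ⋃_{n < N} R n`. The atoms of the partitions generated by the sides of
the rectangles of `H_N` reduce duality for `1_{H_N}` to a transport problem between two finite
probability vectors `m`, `m'`. There the value `w ↦ inf {u ⬝ m + v ⬝ m' : w ≤ u ⊕ v}` of the dual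
problem is sublinear, and by Hahn–Banach it has a linear minorant that is exact at `1_K`; such a
minorant is a transport plan, which lifts to a coupling `P`. This gives `f_N, g_N` with values in
`[0, 1]`, `f_N ⊕ g_N ≥ 1` on `H_N` and `μ f_N + ν g_N ≤ P(H_N) + 1/(N+1) ≤ α* + 1/(N+1)`.

Along an ultrafilter the set functions `A ↦ ∫_A f_N dμ` converge to a finitely additive function
dominated by `μ`, hence to a measure with a density `F` with values in `[0, 1]`; likewise `G`.
Every rectangle `A × B` of `H` lies in `H_N` for large `N`, so
`μ A' ν B' ≤ ν B' ∫_{A'} F + μ A' ∫_{B'} G` for all `A' ⊆ A`, `B' ⊆ B`, which forces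
`F x + G y ≥ 1` on `A × B` off a `μ`-null set of `x` and a `ν`-null set of `y`. Setting `F` and
`G` to `1` on these null sets gives a dual pair for `1_H` of cost at most `α*`.
-/

open Set Matrix ProbabilityTheory

theorem indR_nonneg (H : Set (X × Y)) (z : X × Y) : 0 ≤ indR H z := by
  unfold indR
  by_cases h : z ∈ H <;> simp [h]

theorem indR_le_one (H : Set (X × Y)) (z : X × Y) : indR H z ≤ 1 := by
  unfold indR
  by_cases h : z ∈ H <;> simp [h]

section WeakDuality

variable [MeasurableSpace X] [MeasurableSpace Y] {μ : Measure X} {ν : Measure Y}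
  {P : Measure (X × Y)}

theorem integral_indR {H : Set (X × Y)} (hH : MeasurableSet H) :
    ∫ z, indR H z ∂P = P.real H :=
  integral_indicator_one hH

theorem isCoupling_prod (μ : Measure X) (ν : Measure Y) [IsProbabilityMeasure μ]
    [IsProbabilityMeasure ν] : IsCoupling μ ν (μ.prod ν) :=
  ⟨inferInstance, by simp [Measure.map_fst_prod], by simp [Measure.map_snd_prod]⟩

theorem IsCoupling.integral_fst_add_snd {f : X → ℝ} {g : Y → ℝ} (hP : IsCoupling μ ν P)
    (hf : Integrable f μ) (hg : Integrable g ν) :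
    Integrable (fun z => f z.1 + g z.2) P ∧
      ∫ z, (f z.1 + g z.2) ∂P = ∫ x, f x ∂μ + ∫ y, g y ∂ν := by
  obtain ⟨-, rfl, rfl⟩ := hP
  have hf' : Integrable (fun z : X × Y => f z.1) P :=
    (integrable_map_measure hf.aestronglyMeasurable measurable_fst.aemeasurable).1 hf
  have hg' : Integrable (fun z : X × Y => g z.2) P :=
    (integrable_map_measure hg.aestronglyMeasurable measurable_snd.aemeasurable).1 hg
  refine ⟨hf'.add hg', ?_⟩
  rw [MeasureTheory.integral_add hf' hg', integral_map measurable_fst.aemeasurable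
    hf.aestronglyMeasurable, integral_map measurable_snd.aemeasurable hg.aestronglyMeasurable]

theorem IsCoupling.measureReal_le {H : Set (X × Y)} {f : X → ℝ} {g : Y → ℝ}
    (hP : IsCoupling μ ν P) (hH : MeasurableSet H) (hf : Integrable f μ) (hg : Integrable g ν)
    (hfg : ∀ x y, indR H (x, y) ≤ f x + g y) : P.real H ≤ ∫ x, f x ∂μ + ∫ y, g y ∂ν := by
  have := hP.1
  obtain ⟨hint, hsum⟩ := hP.integral_fst_add_snd hf hg
  rw [← hsum, ← integral_indR hH]
  exact integral_mono ((integrable_const 1).indicator hH) hint fun z => hfg z.1 z.2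

theorem IsCoupling.measureReal_mem_primalSet {H : Set (X × Y)} (hP : IsCoupling μ ν P)
    (hH : MeasurableSet H) : P.real H ∈ primalSet μ ν (indR H) :=
  ⟨P, hP, (integral_indR hH).symm⟩

theorem bddAbove_primalSet_indR (H : Set (X × Y)) : BddAbove (primalSet μ ν (indR H)) := by
  refine ⟨1, ?_⟩
  rintro _ ⟨P, hP, rfl⟩
  have := hP.1
  calc ∫ z, indR H z ∂P ≤ ∫ _, (1 : ℝ) ∂P :=
        integral_mono_of_nonneg (.of_forall (indR_nonneg H)) (integrable_const 1)
          (.of_forall (indR_le_one H))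
    _ = 1 := by simp

theorem IsCoupling.measureReal_le_alphaSup {H : Set (X × Y)} (hP : IsCoupling μ ν P)
    (hH : MeasurableSet H) : P.real H ≤ alphaSup μ ν (indR H) :=
  le_csSup (bddAbove_primalSet_indR H) (hP.measureReal_mem_primalSet hH)

variable [IsProbabilityMeasure μ] [IsProbabilityMeasure ν]

theorem bddBelow_dualUpperSet_indR {H : Set (X × Y)} (hH : MeasurableSet H) :
    BddBelow (dualUpperSet μ ν (indR H)) := by
  refine ⟨(μ.prod ν).real H, ?_⟩
  rintro _ ⟨f, g, hf, hg, hfg, rfl⟩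
  exact (isCoupling_prod μ ν).measureReal_le hH hf hg hfg

theorem betaInf_indR_le {H : Set (X × Y)} (hH : MeasurableSet H) {f : X → ℝ} {g : Y → ℝ}
    (hf : Integrable f μ) (hg : Integrable g ν) (hfg : ∀ x y, indR H (x, y) ≤ f x + g y) :
    betaInf μ ν (indR H) ≤ ∫ x, f x ∂μ + ∫ y, g y ∂ν :=
  csInf_le (bddBelow_dualUpperSet_indR hH) ⟨f, g, hf, hg, hfg, rfl⟩

theorem alphaSup_indR_le_betaInf {H : Set (X × Y)} (hH : MeasurableSet H) :
    alphaSup μ ν (indR H) ≤ betaInf μ ν (indR H) := by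
  refine le_csInf ⟨_, 1, 0, integrable_const 1, integrable_const 0, fun x y => ?_, rfl⟩ ?_
  · simpa using indR_le_one H (x, y)
  rintro _ ⟨f, g, hf, hg, hfg, rfl⟩
  refine csSup_le ⟨_, (isCoupling_prod μ ν).measureReal_mem_primalSet hH⟩ ?_
  rintro _ ⟨P, hP, rfl⟩
  rw [integral_indR hH]
  exact hP.measureReal_le hH hf hg hfg

end WeakDuality

theorem exists_linearMap_eq_le_of_sublinear {E : Type*} [AddCommGroup E] [Module ℝ E] (N : E → ℝ)
    (N_smul : ∀ c : ℝ, 0 < c → ∀ x, N (c • x) = c * N x) (N_add : ∀ x y, N (x + y) ≤ N x + N y)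
    (x₀ : E) : ∃ g : E →ₗ[ℝ] ℝ, g x₀ = N x₀ ∧ ∀ x, g x ≤ N x := by
  have N_zero : N 0 = 0 := by
    have := N_smul 2 two_pos 0
    rw [smul_zero] at this
    linarith
  rcases eq_or_ne x₀ 0 with rfl | hx₀
  · obtain ⟨g, -, hg⟩ := exists_extension_of_le_sublinear ⟨⊥, 0⟩ N N_smul N_add fun x => by
      simp [(Submodule.mem_bot ℝ).1 x.2, N_zero]
    exact ⟨g, by simp [N_zero], hg⟩
  have h_dom : ∀ x : (LinearPMap.mkSpanSingleton (σ := RingHom.id ℝ) x₀ (N x₀) hx₀).domain,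
      LinearPMap.mkSpanSingleton x₀ (N x₀) hx₀ x ≤ N x := by
    rintro ⟨x, hx⟩
    obtain ⟨a, rfl⟩ := Submodule.mem_span_singleton.mp hx
    rw [LinearPMap.mkSpanSingleton'_apply, RingHom.id_apply, smul_eq_mul]
    change a * N x₀ ≤ N (a • x₀)
    rcases lt_trichotomy a 0 with ha | rfl | ha
    · have h := N_add x₀ (-x₀)
      rw [add_neg_cancel, N_zero] at h
      rw [show a • x₀ = (-a) • -x₀ by simp, N_smul _ (neg_pos.2 ha)]
      nlinarith
    · simp [N_zero]
    · rw [N_smul a ha]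
  obtain ⟨g, hg_ext, hg⟩ := exists_extension_of_le_sublinear _ N N_smul N_add h_dom
  exact ⟨g, (hg_ext ⟨x₀, _⟩).trans (LinearPMap.mkSpanSingleton_apply ℝ ℝ hx₀ _), hg⟩

section FiniteTransport

variable {S T : Type*} [Fintype S] [Fintype T]

def transportDualSet (m : S → ℝ) (m' : T → ℝ) (w : S × T → ℝ) : Set ℝ :=
  {r | ∃ (u : S → ℝ) (v : T → ℝ), (∀ p, w p ≤ u p.1 + v p.2) ∧ r = u ⬝ᵥ m + v ⬝ᵥ m'}

def transportDual (m : S → ℝ) (m' : T → ℝ) (w : S × T → ℝ) : ℝ :=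
  sInf (transportDualSet m m' w)

structure IsTransportPlan (m : S → ℝ) (m' : T → ℝ) (c : S × T → ℝ) : Prop where
  nonneg : ∀ p, 0 ≤ c p
  row_sum : ∀ s, ∑ t, c (s, t) = m s
  col_sum : ∀ t, ∑ s, c (s, t) = m' t

variable {m : S → ℝ} {m' : T → ℝ}

theorem IsTransportPlan.apply_le_fst {c : S × T → ℝ} (hc : IsTransportPlan m m' c) (p : S × T) :
    c p ≤ m p.1 :=
  (Finset.single_le_sum (f := fun t => c (p.1, t)) (fun _ _ => hc.nonneg _)
    (Finset.mem_univ p.2)).trans_eq (hc.row_sum p.1)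

theorem IsTransportPlan.apply_le_snd {c : S × T → ℝ} (hc : IsTransportPlan m m' c) (p : S × T) :
    c p ≤ m' p.2 :=
  (Finset.single_le_sum (f := fun s => c (s, p.2)) (fun _ _ => hc.nonneg _)
    (Finset.mem_univ p.1)).trans_eq (hc.col_sum p.2)

theorem sum_mul_add_eq_dotProduct (hm : m ∈ stdSimplex ℝ S) (hm' : m' ∈ stdSimplex ℝ T)
    (u : S → ℝ) (v : T → ℝ) :
    ∑ p : S × T, m p.1 * m' p.2 * (u p.1 + v p.2) = u ⬝ᵥ m + v ⬝ᵥ m' := by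
  simp only [Fintype.sum_prod_type, mul_add, Finset.sum_add_distrib, dotProduct]
  rw [Finset.sum_comm (f := fun s t => m s * m' t * v t)]
  simp only [mul_comm (m _) (m' _), mul_assoc, ← Finset.mul_sum, ← Finset.sum_mul]
  simp only [← mul_assoc, ← Finset.sum_mul, hm.2, hm'.2, one_mul, mul_comm]

theorem transportDualSet_nonempty (m : S → ℝ) (m' : T → ℝ) (w : S × T → ℝ) :
    (transportDualSet m m' w).Nonempty :=
  ⟨_, fun _ => ∑ p, |w p|, 0, fun p => by
    simpa using (le_abs_self (w p)).trans
      (Finset.single_le_sum (fun q _ => abs_nonneg (w q)) (Finset.mem_univ p)), rfl⟩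

theorem bddBelow_transportDualSet (hm : m ∈ stdSimplex ℝ S) (hm' : m' ∈ stdSimplex ℝ T)
    (w : S × T → ℝ) : BddBelow (transportDualSet m m' w) := by
  refine ⟨∑ p : S × T, m p.1 * m' p.2 * w p, ?_⟩
  rintro _ ⟨u, v, huv, rfl⟩
  rw [← sum_mul_add_eq_dotProduct hm hm']
  exact Finset.sum_le_sum fun p _ =>
    mul_le_mul_of_nonneg_left (huv p) (mul_nonneg (hm.1 p.1) (hm'.1 p.2))

theorem transportDual_le (hm : m ∈ stdSimplex ℝ S) (hm' : m' ∈ stdSimplex ℝ T)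
    {w : S × T → ℝ} {u : S → ℝ} {v : T → ℝ} (huv : ∀ p, w p ≤ u p.1 + v p.2) :
    transportDual m m' w ≤ u ⬝ᵥ m + v ⬝ᵥ m' :=
  csInf_le (bddBelow_transportDualSet hm hm' w) ⟨u, v, huv, rfl⟩

theorem exists_lt_transportDual_add (m : S → ℝ) (m' : T → ℝ) (w : S × T → ℝ) {ε : ℝ}
    (hε : 0 < ε) : ∃ (u : S → ℝ) (v : T → ℝ), (∀ p, w p ≤ u p.1 + v p.2) ∧
      u ⬝ᵥ m + v ⬝ᵥ m' < transportDual m m' w + ε := by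
  obtain ⟨_, ⟨u, v, huv, rfl⟩, hlt⟩ :=
    exists_lt_of_csInf_lt (transportDualSet_nonempty m m' w) (lt_add_of_pos_right _ hε)
  exact ⟨u, v, huv, hlt⟩

theorem transportDual_add_le (hm : m ∈ stdSimplex ℝ S) (hm' : m' ∈ stdSimplex ℝ T)
    (w₁ w₂ : S × T → ℝ) :
    transportDual m m' (w₁ + w₂) ≤ transportDual m m' w₁ + transportDual m m' w₂ := by
  rw [transportDual, transportDual, transportDual, ← csInf_add (transportDualSet_nonempty m m' w₁)
    (bddBelow_transportDualSet hm hm' w₁) (transportDualSet_nonempty m m' w₂)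
    (bddBelow_transportDualSet hm hm' w₂)]
  refine csInf_le_csInf (bddBelow_transportDualSet hm hm' _)
    ((transportDualSet_nonempty m m' w₁).add (transportDualSet_nonempty m m' w₂)) ?_
  rintro _ ⟨_, ⟨u₁, v₁, h₁, rfl⟩, _, ⟨u₂, v₂, h₂, rfl⟩, rfl⟩
  refine ⟨u₁ + u₂, v₁ + v₂, fun p => ?_, by simp only [add_dotProduct]; ring⟩
  simpa only [Pi.add_apply, add_add_add_comm] using add_le_add (h₁ p) (h₂ p)

theorem transportDual_smul_le (hm : m ∈ stdSimplex ℝ S) (hm' : m' ∈ stdSimplex ℝ T)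
    {c : ℝ} (hc : 0 ≤ c) (w : S × T → ℝ) :
    transportDual m m' (c • w) ≤ c * transportDual m m' w := by
  rw [transportDual, transportDual, ← smul_eq_mul, ← Real.sInf_smul_of_nonneg hc]
  refine csInf_le_csInf (bddBelow_transportDualSet hm hm' _)
    ((transportDualSet_nonempty m m' w).smul_set) ?_
  rintro _ ⟨_, ⟨u, v, huv, rfl⟩, rfl⟩
  refine ⟨c • u, c • v, fun p => ?_, by simp only [smul_dotProduct, smul_add]⟩
  simpa only [Pi.smul_apply, smul_eq_mul, mul_add] using mul_le_mul_of_nonneg_left (huv p) hc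

theorem transportDual_smul (hm : m ∈ stdSimplex ℝ S) (hm' : m' ∈ stdSimplex ℝ T)
    {c : ℝ} (hc : 0 < c) (w : S × T → ℝ) :
    transportDual m m' (c • w) = c * transportDual m m' w := by
  refine (transportDual_smul_le hm hm' hc.le w).antisymm ?_
  have h := transportDual_smul_le hm hm' (inv_nonneg.2 hc.le) (c • w)
  rw [inv_smul_smul₀ hc.ne'] at h
  rwa [← le_div_iff₀' hc, div_eq_inv_mul]

theorem apply_eq_of_le_transportDual (hm : m ∈ stdSimplex ℝ S) (hm' : m' ∈ stdSimplex ℝ T)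
    {g : (S × T → ℝ) →ₗ[ℝ] ℝ} (hg : ∀ w, g w ≤ transportDual m m' w) (u : S → ℝ) (v : T → ℝ) :
    g (fun p => u p.1 + v p.2) = u ⬝ᵥ m + v ⬝ᵥ m' := by
  refine le_antisymm ((hg _).trans (transportDual_le hm hm' fun p => le_rfl)) ?_
  have h := (hg (-fun p => u p.1 + v p.2)).trans
    (transportDual_le hm hm' (u := -u) (v := -v) fun p => by simp [add_comm])
  rw [map_neg, neg_dotProduct, neg_dotProduct] at h
  linarith

theorem apply_nonneg_of_le_transportDual (hm : m ∈ stdSimplex ℝ S)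
    (hm' : m' ∈ stdSimplex ℝ T) {g : (S × T → ℝ) →ₗ[ℝ] ℝ}
    (hg : ∀ w, g w ≤ transportDual m m' w) {w : S × T → ℝ} (hw : 0 ≤ w) : 0 ≤ g w := by
  have h := (hg (-w)).trans (transportDual_le hm hm' (u := 0) (v := 0) fun p => by simpa using hw p)
  rw [map_neg] at h
  simpa using h

theorem isTransportPlan_of_le_transportDual [DecidableEq S] [DecidableEq T]
    (hm : m ∈ stdSimplex ℝ S) (hm' : m' ∈ stdSimplex ℝ T) {g : (S × T → ℝ) →ₗ[ℝ] ℝ}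
    (hg : ∀ w, g w ≤ transportDual m m' w) :
    IsTransportPlan m m' fun p => g (Pi.single p 1) where
  nonneg p := apply_nonneg_of_le_transportDual hm hm' hg (Pi.single_nonneg.2 zero_le_one)
  row_sum s := by
    have hrow : ∑ t, (Pi.single (s, t) 1 : S × T → ℝ) =
        fun p => (Pi.single s 1 : S → ℝ) p.1 + (0 : T → ℝ) p.2 := by
      ext ⟨s', t'⟩
      by_cases h : s' = s <;> simp [Finset.sum_apply, Pi.single_apply, h]
    rw [← map_sum, hrow, apply_eq_of_le_transportDual hm hm' hg]
    simp
  col_sum t := by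
    have hcol : ∑ s, (Pi.single (s, t) 1 : S × T → ℝ) =
        fun p => (0 : S → ℝ) p.1 + (Pi.single t 1 : T → ℝ) p.2 := by
      ext ⟨s', t'⟩
      by_cases h : t' = t <;> simp [Finset.sum_apply, Pi.single_apply, h]
    rw [← map_sum, hcol, apply_eq_of_le_transportDual hm hm' hg]
    simp

theorem exists_dual_Icc_of_indicator_le (hm : m ∈ stdSimplex ℝ S) (hm' : m' ∈ stdSimplex ℝ T)
    {K : Set (S × T)} {u : S → ℝ} {v : T → ℝ} (huv : ∀ p, K.indicator 1 p ≤ u p.1 + v p.2) :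
    ∃ (u' : S → ℝ) (v' : T → ℝ), (∀ s, u' s ∈ Icc (0 : ℝ) 1) ∧ (∀ t, v' t ∈ Icc (0 : ℝ) 1) ∧
      (∀ p ∈ K, 1 ≤ u' p.1 + v' p.2) ∧ u' ⬝ᵥ m + v' ⬝ᵥ m' ≤ u ⬝ᵥ m + v ⬝ᵥ m' := by
  have : Nonempty T := by
    by_contra h
    simpa [not_nonempty_iff.1 h] using hm'.2
  obtain ⟨t₀, ht₀⟩ := exists_eq_ciInf_of_finite (f := v)
  set a := ⨅ t, v t
  -- shifting by `a` makes both potentials nonnegative at the same cost; truncating them at `1`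
  -- then keeps `1 ≤ u' ⊕ v'` on `K`
  have hu : ∀ s, 0 ≤ u s + a := fun s => by
    simpa [← ht₀] using (indicator_nonneg (fun _ _ => zero_le_one) (s, t₀)).trans (huv (s, t₀))
  have hv : ∀ t, 0 ≤ v t - a := fun t => sub_nonneg.2 (ciInf_le (Finite.bddBelow_range v) t)
  refine ⟨fun s => min 1 (u s + a), fun t => min 1 (v t - a),
    fun s => ⟨le_min zero_le_one (hu s), min_le_left _ _⟩,
    fun t => ⟨le_min zero_le_one (hv t), min_le_left _ _⟩, fun p hp => ?_, ?_⟩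
  · have h := huv p
    rw [indicator_of_mem hp, Pi.one_apply] at h
    have := hu p.1
    have := hv p.2
    rcases min_cases 1 (u p.1 + a) with ⟨h₁, -⟩ | ⟨h₁, -⟩ <;>
      rcases min_cases 1 (v p.2 - a) with ⟨h₂, -⟩ | ⟨h₂, -⟩ <;> linarith
  · calc (fun s => min 1 (u s + a)) ⬝ᵥ m + (fun t => min 1 (v t - a)) ⬝ᵥ m'
        ≤ (fun s => u s + a) ⬝ᵥ m + (fun t => v t - a) ⬝ᵥ m' :=
          add_le_add (dotProduct_le_dotProduct_of_nonneg_right (fun s => min_le_right _ _) hm.1)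
            (dotProduct_le_dotProduct_of_nonneg_right (fun t => min_le_right _ _) hm'.1)
      _ = u ⬝ᵥ m + v ⬝ᵥ m' := by
          simp only [dotProduct, add_mul, sub_mul, Finset.sum_add_distrib, Finset.sum_sub_distrib,
            ← Finset.mul_sum, hm.2, hm'.2]
          ring

theorem exists_transportPlan_dual_Icc (hm : m ∈ stdSimplex ℝ S) (hm' : m' ∈ stdSimplex ℝ T)
    (K : Set (S × T)) {ε : ℝ} (hε : 0 < ε) :
    ∃ c, IsTransportPlan m m' c ∧ ∃ (u : S → ℝ) (v : T → ℝ), (∀ s, u s ∈ Icc (0 : ℝ) 1) ∧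
      (∀ t, v t ∈ Icc (0 : ℝ) 1) ∧ (∀ p ∈ K, 1 ≤ u p.1 + v p.2) ∧
      u ⬝ᵥ m + v ⬝ᵥ m' ≤ ∑ p, K.indicator c p + ε := by
  classical
  obtain ⟨g, hgK, hg⟩ := exists_linearMap_eq_le_of_sublinear (transportDual m m')
    (fun _ hc w => transportDual_smul hm hm' hc w) (transportDual_add_le hm hm') (K.indicator 1)
  have hgK' : g (K.indicator 1) = ∑ p, K.indicator (fun p => g (Pi.single p 1)) p := by
    rw [LinearMap.pi_apply_eq_sum_univ g]
    refine Finset.sum_congr rfl fun p _ => ?_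
    have he : (fun q => if p = q then (1 : ℝ) else 0) = Pi.single p 1 := by
      ext q
      simp [Pi.single_apply, eq_comm]
    by_cases hp : p ∈ K <;> simp [hp, he]
  obtain ⟨u, v, huv, hlt⟩ := exists_lt_transportDual_add m m' (K.indicator 1) hε
  obtain ⟨u', v', hu', hv', hK, hle⟩ := exists_dual_Icc_of_indicator_le hm hm' huv
  exact ⟨_, isTransportPlan_of_le_transportDual hm hm' hg, u', v', hu', hv', hK, by linarith⟩

end FiniteTransport

theorem ofReal_mul_cond_of_le_measureReal {Z : Type*} [MeasurableSpace Z] {μ : Measure Z}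
    [IsFiniteMeasure μ] {s t : Set Z} (hs : MeasurableSet s) (hst : s ⊆ t) {x : ℝ}
    (hx : x ≤ μ.real s) : ENNReal.ofReal x * μ[t|s] = ENNReal.ofReal x := by
  -- `μ[|s]` is the zero measure when `μ s = 0`, but then `x ≤ 0`
  by_cases h : μ s = 0
  · rw [ENNReal.ofReal_of_nonpos (by simpa [measureReal_def, h] using hx), zero_mul]
  · rw [cond_apply hs, inter_eq_left.2 hst, ENNReal.inv_mul_cancel h (measure_ne_top μ s), mul_one]

section PlanCoupling

variable {S T : Type*} [Fintype S] [Fintype T] [MeasurableSpace X] [MeasurableSpace Y]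

def planCoupling (μ : Measure X) (ν : Measure Y) (a : X → S) (b : Y → T) (c : S × T → ℝ) :
    Measure (X × Y) :=
  ∑ p : S × T, ENNReal.ofReal (c p) • (μ[|a ⁻¹' {p.1}]).prod (ν[|b ⁻¹' {p.2}])

variable {μ : Measure X} {ν : Measure Y} {a : X → S} {b : Y → T} {c : S × T → ℝ}

theorem planCoupling_prod (E : Set X) (F : Set Y) :
    planCoupling μ ν a b c (E ×ˢ F) =
      ∑ p : S × T, ENNReal.ofReal (c p) * (μ[E|a ⁻¹' {p.1}] * ν[F|b ⁻¹' {p.2}]) := by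
  simp [planCoupling, Measure.prod_prod]

variable [MeasurableSpace S] [MeasurableSpace T] [DiscreteMeasurableSpace S]
  [DiscreteMeasurableSpace T]

theorem map_fst_planCoupling [IsFiniteMeasure μ] [IsFiniteMeasure ν] (ha : Measurable a)
    (hb : Measurable b)
    (hc : IsTransportPlan (fun s => μ.real (a ⁻¹' {s})) (fun t => ν.real (b ⁻¹' {t})) c) :
    (planCoupling μ ν a b c).map Prod.fst = μ := by
  ext E hE
  rw [Measure.map_apply measurable_fst hE, ← prod_univ, planCoupling_prod, Fintype.sum_prod_type]
  conv_rhs => rw [← sum_meas_smul_cond_fiber ha μ]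
  rw [Measure.coe_finsetSum, Finset.sum_apply]
  refine Finset.sum_congr rfl fun s _ => ?_
  calc ∑ t, ENNReal.ofReal (c (s, t)) * (μ[E|a ⁻¹' {s}] * ν[univ|b ⁻¹' {t}])
      = (∑ t, ENNReal.ofReal (c (s, t))) * μ[E|a ⁻¹' {s}] := by
        rw [Finset.sum_mul]
        refine Finset.sum_congr rfl fun t _ => ?_
        rw [mul_comm (μ[E|_]), ← mul_assoc, ofReal_mul_cond_of_le_measureReal
          (hb (measurableSet_singleton t)) (subset_univ _) (hc.apply_le_snd (s, t))]
    _ = (μ (a ⁻¹' {s}) • μ[|a ⁻¹' {s}]) E := by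
        rw [← ENNReal.ofReal_sum_of_nonneg fun _ _ => hc.nonneg _, hc.row_sum,
          ofReal_measureReal, Measure.smul_apply, smul_eq_mul]

theorem map_snd_planCoupling [IsFiniteMeasure μ] [IsFiniteMeasure ν] (ha : Measurable a)
    (hb : Measurable b)
    (hc : IsTransportPlan (fun s => μ.real (a ⁻¹' {s})) (fun t => ν.real (b ⁻¹' {t})) c) :
    (planCoupling μ ν a b c).map Prod.snd = ν := by
  ext F hF
  rw [Measure.map_apply measurable_snd hF, ← univ_prod, planCoupling_prod,
    Fintype.sum_prod_type_right]
  conv_rhs => rw [← sum_meas_smul_cond_fiber hb ν]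
  rw [Measure.coe_finsetSum, Finset.sum_apply]
  refine Finset.sum_congr rfl fun t _ => ?_
  calc ∑ s, ENNReal.ofReal (c (s, t)) * (μ[univ|a ⁻¹' {s}] * ν[F|b ⁻¹' {t}])
      = (∑ s, ENNReal.ofReal (c (s, t))) * ν[F|b ⁻¹' {t}] := by
        rw [Finset.sum_mul]
        refine Finset.sum_congr rfl fun s _ => ?_
        rw [← mul_assoc, ofReal_mul_cond_of_le_measureReal (ha (measurableSet_singleton s))
          (subset_univ _) (hc.apply_le_fst (s, t))]
    _ = (ν (b ⁻¹' {t}) • ν[|b ⁻¹' {t}]) F := by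
        rw [← ENNReal.ofReal_sum_of_nonneg fun _ _ => hc.nonneg _, hc.col_sum,
          ofReal_measureReal, Measure.smul_apply, smul_eq_mul]

theorem isCoupling_planCoupling [IsProbabilityMeasure μ] [IsProbabilityMeasure ν]
    (ha : Measurable a) (hb : Measurable b)
    (hc : IsTransportPlan (fun s => μ.real (a ⁻¹' {s})) (fun t => ν.real (b ⁻¹' {t})) c) :
    IsCoupling μ ν (planCoupling μ ν a b c) := by
  have hfst := map_fst_planCoupling ha hb hc
  refine ⟨⟨?_⟩, hfst, map_snd_planCoupling ha hb hc⟩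
  rw [← preimage_univ (f := Prod.fst), ← Measure.map_apply measurable_fst .univ, hfst,
    measure_univ]

theorem ofReal_le_planCoupling [IsFiniteMeasure μ] [IsFiniteMeasure ν] (ha : Measurable a)
    (hb : Measurable b)
    (hc : IsTransportPlan (fun s => μ.real (a ⁻¹' {s})) (fun t => ν.real (b ⁻¹' {t})) c)
    (p : S × T) :
    ENNReal.ofReal (c p) ≤ planCoupling μ ν a b c ((a ⁻¹' {p.1}) ×ˢ (b ⁻¹' {p.2})) := by
  rw [planCoupling_prod]
  refine le_trans (le_of_eq ?_) (Finset.single_le_sum (fun _ _ => zero_le) (Finset.mem_univ p))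
  rw [← mul_assoc, ofReal_mul_cond_of_le_measureReal (ha (measurableSet_singleton _)) subset_rfl
    (hc.apply_le_fst p), ofReal_mul_cond_of_le_measureReal (hb (measurableSet_singleton _))
    subset_rfl (hc.apply_le_snd p)]

end PlanCoupling

section FiniteRectangles

variable [MeasurableSpace X] [MeasurableSpace Y] {S T : Type*} [Fintype S] [Fintype T]
  [MeasurableSpace S] [MeasurableSpace T] [DiscreteMeasurableSpace S] [DiscreteMeasurableSpace T]

theorem measureReal_preimage_singleton_mem_stdSimplex (μ : Measure X) [IsProbabilityMeasure μ]
    {a : X → S} (ha : Measurable a) : (fun s => μ.real (a ⁻¹' {s})) ∈ stdSimplex ℝ S :=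
  ⟨fun _ => measureReal_nonneg, by
    rw [sum_measureReal_preimage_singleton _ fun s _ => ha (measurableSet_singleton s)]
    simp⟩

theorem integral_comp_eq_dotProduct (μ : Measure X) [IsFiniteMeasure μ] {a : X → S}
    (ha : Measurable a) (u : S → ℝ) :
    ∫ x, u (a x) ∂μ = u ⬝ᵥ fun s => μ.real (a ⁻¹' {s}) := by
  rw [← integral_map ha.aemeasurable (Measurable.of_discrete).aestronglyMeasurable,
    integral_fintype Integrable.of_finite, dotProduct]
  refine Finset.sum_congr rfl fun s _ => ?_
  rw [map_measureReal_apply ha (measurableSet_singleton s), smul_eq_mul, mul_comm]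

theorem exists_isCoupling_dual_Icc_of_preimage (μ : Measure X) (ν : Measure Y)
    [IsProbabilityMeasure μ] [IsProbabilityMeasure ν] {a : X → S} {b : Y → T}
    (ha : Measurable a) (hb : Measurable b) (K : Set (S × T)) {ε : ℝ} (hε : 0 < ε) :
    ∃ P, IsCoupling μ ν P ∧ ∃ (f : X → ℝ) (g : Y → ℝ), Measurable f ∧ Measurable g ∧
      (∀ x, f x ∈ Icc (0 : ℝ) 1) ∧ (∀ y, g y ∈ Icc (0 : ℝ) 1) ∧
      (∀ x y, (a x, b y) ∈ K → 1 ≤ f x + g y) ∧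
      ∫ x, f x ∂μ + ∫ y, g y ∂ν ≤ P.real ((fun z => (a z.1, b z.2)) ⁻¹' K) + ε := by
  classical
  obtain ⟨c, hc, u, v, hu, hv, hK, hcost⟩ := exists_transportPlan_dual_Icc
    (measureReal_preimage_singleton_mem_stdSimplex μ ha)
    (measureReal_preimage_singleton_mem_stdSimplex ν hb) K hε
  set P := planCoupling μ ν a b c
  have hP : IsCoupling μ ν P := isCoupling_planCoupling ha hb hc
  have := hP.1
  have hab : Measurable fun z : X × Y => (a z.1, b z.2) :=
    (ha.comp measurable_fst).prodMk (hb.comp measurable_snd)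
  have hmass : ∑ p, K.indicator c p ≤ P.real ((fun z => (a z.1, b z.2)) ⁻¹' K) := by
    have hpre : ∀ p : S × T,
        (fun z : X × Y => (a z.1, b z.2)) ⁻¹' {p} = (a ⁻¹' {p.1}) ×ˢ (b ⁻¹' {p.2}) := by
      intro p
      ext z
      simp [Prod.ext_iff]
    calc ∑ p, K.indicator c p = ∑ p ∈ Finset.univ.filter (· ∈ K), c p := by
          rw [Finset.sum_filter]
          simp only [indicator_apply]
      _ ≤ ∑ p ∈ Finset.univ.filter (· ∈ K), P.real ((fun z => (a z.1, b z.2)) ⁻¹' {p}) :=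
          Finset.sum_le_sum fun p _ => by
            rw [hpre, measureReal_def, ← ENNReal.ofReal_le_iff_le_toReal (measure_ne_top _ _)]
            exact ofReal_le_planCoupling ha hb hc p
      _ = P.real ((fun z => (a z.1, b z.2)) ⁻¹' K) := by
          rw [sum_measureReal_preimage_singleton _ fun p _ => hab (measurableSet_singleton p),
            Finset.coe_filter_univ, ofPred_mem_eq]
  refine ⟨P, hP, fun x => u (a x), fun y => v (b y), Measurable.of_discrete.comp ha,
    Measurable.of_discrete.comp hb,
    fun x => hu _, fun y => hv _, fun x y h => hK _ h, ?_⟩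
  rw [integral_comp_eq_dotProduct μ ha, integral_comp_eq_dotProduct ν hb]
  linarith

theorem exists_isCoupling_dual_Icc_of_rect {ι : Type*} [Finite ι] (μ : Measure X) (ν : Measure Y)
    [IsProbabilityMeasure μ] [IsProbabilityMeasure ν] {A : ι → Set X} {B : ι → Set Y}
    (hA : ∀ i, MeasurableSet (A i)) (hB : ∀ i, MeasurableSet (B i)) {ε : ℝ} (hε : 0 < ε) :
    ∃ P, IsCoupling μ ν P ∧ ∃ (f : X → ℝ) (g : Y → ℝ), Measurable f ∧ Measurable g ∧
      (∀ x, f x ∈ Icc (0 : ℝ) 1) ∧ (∀ y, g y ∈ Icc (0 : ℝ) 1) ∧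
      (∀ i, ∀ x ∈ A i, ∀ y ∈ B i, 1 ≤ f x + g y) ∧
      ∫ x, f x ∂μ + ∫ y, g y ∂ν ≤ P.real (⋃ i, A i ×ˢ B i) + ε := by
  classical
  have := Fintype.ofFinite ι
  have hpre : (fun z : X × Y => ({i | z.1 ∈ A i}, {i | z.2 ∈ B i})) ⁻¹'
      {p : Set ι × Set ι | (p.1 ∩ p.2).Nonempty} = ⋃ i, A i ×ˢ B i := by
    ext z
    simp [Set.Nonempty]
  obtain ⟨P, hP, f, g, hf, hg, hf01, hg01, hfg, hcost⟩ := exists_isCoupling_dual_Icc_of_preimage μ ν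
    (measurable_set_iff.2 fun i => (hA i).mem) (measurable_set_iff.2 fun i => (hB i).mem)
    {p : Set ι × Set ι | (p.1 ∩ p.2).Nonempty} hε
  exact ⟨P, hP, f, g, hf, hg, hf01, hg01, fun i x hx y hy => hfg x y ⟨i, hx, hy⟩, hpre ▸ hcost⟩

theorem exists_dual_Icc_le_alphaSup {ι : Type*} [Finite ι] (μ : Measure X) (ν : Measure Y)
    [IsProbabilityMeasure μ] [IsProbabilityMeasure ν] {A : ι → Set X} {B : ι → Set Y}
    (hA : ∀ i, MeasurableSet (A i)) (hB : ∀ i, MeasurableSet (B i)) {H : Set (X × Y)}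
    (hH : MeasurableSet H) (hAB : ⋃ i, A i ×ˢ B i ⊆ H) {ε : ℝ} (hε : 0 < ε) :
    ∃ (f : X → ℝ) (g : Y → ℝ), Measurable f ∧ Measurable g ∧
      (∀ x, f x ∈ Icc (0 : ℝ) 1) ∧ (∀ y, g y ∈ Icc (0 : ℝ) 1) ∧
      (∀ i, ∀ x ∈ A i, ∀ y ∈ B i, 1 ≤ f x + g y) ∧
      ∫ x, f x ∂μ + ∫ y, g y ∂ν ≤ alphaSup μ ν (indR H) + ε := by
  obtain ⟨P, hP, f, g, hf, hg, hf01, hg01, hfg, hcost⟩ :=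
    exists_isCoupling_dual_Icc_of_rect μ ν hA hB hε
  have := hP.1
  exact ⟨f, g, hf, hg, hf01, hg01, hfg, hcost.trans (add_le_add_left
    ((measureReal_mono hAB).trans (hP.measureReal_le_alphaSup hH)) _)⟩

end FiniteRectangles

section WeakLimit

variable {Ω : Type*} [MeasurableSpace Ω] {μ : Measure Ω}

theorem integrable_of_mem_Icc [IsFiniteMeasure μ] {f : Ω → ℝ} (hf : Measurable f)
    (hf01 : ∀ ω, f ω ∈ Icc (0 : ℝ) 1) : Integrable f μ :=
  .of_bound hf.aestronglyMeasurable 1 (.of_forall fun ω => by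
    rw [Real.norm_eq_abs, abs_of_nonneg (hf01 ω).1]
    exact (hf01 ω).2)

theorem hasSum_of_additive_of_le_measureReal [IsFiniteMeasure μ] {L : Set Ω → ℝ}
    (hL_nonneg : ∀ A, 0 ≤ L A) (hL_le : ∀ A, MeasurableSet A → L A ≤ μ.real A)
    (hL_union : ∀ A B, MeasurableSet A → MeasurableSet B → Disjoint A B → L (A ∪ B) = L A + L B)
    {s : ℕ → Set Ω} (hs : ∀ i, MeasurableSet (s i)) (hd : Pairwise (Function.onFun Disjoint s)) :
    HasSum (fun i => L (s i)) (L (⋃ i, s i)) := by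
  have hacc_meas : ∀ n, MeasurableSet (accumulate s n) := fun n =>
    .iUnion fun i => .iUnion fun _ => hs i
  have hacc : ∀ n, L (accumulate s n) = ∑ i ∈ Finset.range (n + 1), L (s i) := by
    intro n
    induction n with
    | zero => simp
    | succ n ih =>
      rw [accumulate_succ,
        hL_union _ _ (hacc_meas n) (hs _) (disjoint_accumulate hd n.lt_succ_self),
        ih, ← Finset.sum_range_succ (fun i => L (s i)) (n + 1)]
  have hrest : ∀ n, MeasurableSet ((⋃ i, s i) \ accumulate s n) := fun n =>
    (MeasurableSet.iUnion hs).diff (hacc_meas n)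
  have hsplit : ∀ n, L (⋃ i, s i) = L (accumulate s n) + L ((⋃ i, s i) \ accumulate s n) := by
    intro n
    rw [← hL_union _ _ (hacc_meas n) (hrest n) disjoint_sdiff_right,
      union_sdiff_cancel (accumulate_subset_iUnion n)]
  have hμ : Tendsto (fun n => μ.real (accumulate s n)) atTop (𝓝 (μ.real (⋃ i, s i))) :=
    (ENNReal.tendsto_toReal (measure_ne_top _ _)).comp tendsto_measure_iUnion_accumulate
  have hlim : Tendsto (fun n => L (accumulate s n)) atTop (𝓝 (L (⋃ i, s i))) := by
    have hlow : Tendsto (fun n => L (⋃ i, s i) - (μ.real (⋃ i, s i) - μ.real (accumulate s n)))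
        atTop (𝓝 (L (⋃ i, s i))) := by
      simpa using (tendsto_const_nhds (x := L (⋃ i, s i))).sub
        ((tendsto_const_nhds (x := μ.real (⋃ i, s i))).sub hμ)
    refine tendsto_of_tendsto_of_tendsto_of_le_of_le hlow tendsto_const_nhds
      (fun n => ?_) fun n => ?_
    · have h := hL_le _ (hrest n)
      rw [measureReal_sdiff (accumulate_subset_iUnion n) (hacc_meas n)] at h
      linarith [hsplit n]
    · linarith [hsplit n, hL_nonneg ((⋃ i, s i) \ accumulate s n)]
  simp_rw [hacc] at hlim
  exact (hasSum_iff_tendsto_nat_of_nonneg (fun i => hL_nonneg _) _).2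
    ((tendsto_add_atTop_iff_nat 1).1 hlim)

theorem exists_measure_le_tendsto_setIntegral [IsFiniteMeasure μ] {ι : Type*} (𝒰 : Ultrafilter ι)
    {φ : ι → Ω → ℝ} (hφ : ∀ i, Measurable (φ i)) (hφ01 : ∀ i ω, φ i ω ∈ Icc (0 : ℝ) 1) :
    ∃ ρ : Measure Ω, ρ ≤ μ ∧ ∀ A, MeasurableSet A →
      Tendsto (fun i => ∫ ω in A, φ i ω ∂μ) 𝒰 (𝓝 (ρ.real A)) := by
  have hint : ∀ i A, IntegrableOn (φ i) A μ := fun i A =>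
    (integrable_of_mem_Icc (hφ i) (hφ01 i)).integrableOn
  have hbound : ∀ i A, ∫ ω in A, φ i ω ∂μ ∈ Icc 0 (μ.real A) := fun i A =>
    ⟨integral_nonneg fun ω => (hφ01 i ω).1, (integral_mono (hint i A) (integrable_const 1)
      fun ω => (hφ01 i ω).2).trans_eq (by simp)⟩
  set L : Set Ω → ℝ := fun A => limUnder 𝒰 fun i => ∫ ω in A, φ i ω ∂μ
  have hL : ∀ A, Tendsto (fun i => ∫ ω in A, φ i ω ∂μ) 𝒰 (𝓝 (L A)) := fun A => by
    obtain ⟨l, -, hl⟩ := isCompact_Icc.ultrafilter_le_nhds (𝒰.map fun i => ∫ ω in A, φ i ω ∂μ)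
      (le_principal_iff.2 (Filter.mem_map.2 (Filter.univ_mem' fun i => hbound i A)))
    exact tendsto_nhds_limUnder ⟨l, hl⟩
  have hL_nonneg : ∀ A, 0 ≤ L A := fun A => ge_of_tendsto' (hL A) fun i => (hbound i A).1
  have hL_le : ∀ A, L A ≤ μ.real A := fun A => le_of_tendsto' (hL A) fun i => (hbound i A).2
  have hL_union : ∀ A B, MeasurableSet A → MeasurableSet B → Disjoint A B →
      L (A ∪ B) = L A + L B := fun A B _ hB hAB => by
    refine tendsto_nhds_unique (hL (A ∪ B)) ?_
    simp_rw [setIntegral_union hAB hB (hint _ A) (hint _ B)]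
    exact (hL A).add (hL B)
  set ρ := Measure.ofMeasurable (fun A _ => ENNReal.ofReal (L A))
    (by simpa using (hL_le ∅).trans_eq measureReal_empty)
    fun s hs hd => by
      have h := hasSum_of_additive_of_le_measureReal hL_nonneg (fun A _ => hL_le A) hL_union hs hd
      rw [← h.tsum_eq, ENNReal.ofReal_tsum_of_nonneg (fun i => hL_nonneg _) h.summable]
  have hρ : ∀ A, MeasurableSet A → ρ A = ENNReal.ofReal (L A) := fun A hA =>
    Measure.ofMeasurable_apply A hA
  refine ⟨ρ, Measure.le_iff.2 fun A hA => ?_, fun A hA => ?_⟩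
  · rw [hρ A hA, ← ofReal_measureReal]
    exact ENNReal.ofReal_le_ofReal (hL_le A)
  · rw [measureReal_def, hρ A hA, ENNReal.toReal_ofReal (hL_nonneg A)]
    exact hL A

theorem exists_density_mem_Icc_of_le [IsFiniteMeasure μ] {ρ : Measure Ω} (hρ : ρ ≤ μ) :
    ∃ F : Ω → ℝ, Measurable F ∧ (∀ ω, F ω ∈ Icc (0 : ℝ) 1) ∧ ∀ A, ∫ ω in A, F ω ∂μ = ρ.real A := by
  have := isFiniteMeasure_of_le μ hρ
  refine ⟨fun ω => min 1 (ρ.rnDeriv μ ω).toReal, measurable_const.min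
    (Measure.measurable_rnDeriv ρ μ).ennreal_toReal,
    fun ω => ⟨le_min zero_le_one ENNReal.toReal_nonneg, min_le_left _ _⟩, fun A => ?_⟩
  rw [← Measure.setIntegral_toReal_rnDeriv (Measure.absolutelyContinuous_of_le hρ) A]
  refine integral_congr_ae (ae_restrict_of_ae ?_)
  filter_upwards [Measure.rnDeriv_le_one_of_le hρ] with ω hω
  exact min_eq_right (ENNReal.toReal_le_of_le_ofReal zero_le_one (by simpa using hω))

theorem exists_tendsto_setIntegral_of_ultrafilter [IsFiniteMeasure μ] {ι : Type*}
    (𝒰 : Ultrafilter ι) {φ : ι → Ω → ℝ} (hφ : ∀ i, Measurable (φ i))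
    (hφ01 : ∀ i ω, φ i ω ∈ Icc (0 : ℝ) 1) :
    ∃ F : Ω → ℝ, Measurable F ∧ (∀ ω, F ω ∈ Icc (0 : ℝ) 1) ∧ ∀ A, MeasurableSet A →
      Tendsto (fun i => ∫ ω in A, φ i ω ∂μ) 𝒰 (𝓝 (∫ ω in A, F ω ∂μ)) := by
  obtain ⟨ρ, hρμ, hρ⟩ := exists_measure_le_tendsto_setIntegral (μ := μ) 𝒰 hφ hφ01
  obtain ⟨F, hF, hF01, hFρ⟩ := exists_density_mem_Icc_of_le hρμ
  exact ⟨F, hF, hF01, fun A hA => (hFρ A).symm ▸ hρ A hA⟩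

end WeakLimit

section Rectangles

variable [MeasurableSpace X] [MeasurableSpace Y] {μ : Measure X} {ν : Measure Y}
  [IsFiniteMeasure μ] [IsFiniteMeasure ν] {A : Set X} {B : Set Y}

theorem mul_le_setIntegral_add_setIntegral {f : X → ℝ} {g : Y → ℝ} (hA : MeasurableSet A)
    (hB : MeasurableSet B) (hf : IntegrableOn f A μ) (hg : IntegrableOn g B ν)
    (hfg : ∀ x ∈ A, ∀ y ∈ B, 1 ≤ f x + g y) :
    μ.real A * ν.real B ≤ ν.real B * ∫ x in A, f x ∂μ + μ.real A * ∫ y in B, g y ∂ν := by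
  have hx : ∀ x ∈ A, ν.real B ≤ ν.real B * f x + ∫ y in B, g y ∂ν := fun x hx => by
    calc ν.real B = ∫ _ in B, (1 : ℝ) ∂ν := by simp
      _ ≤ ∫ y in B, (f x + g y) ∂ν :=
          setIntegral_mono_on integrableOn_const ((integrableOn_const).add hg) hB (hfg x hx)
      _ = ν.real B * f x + ∫ y in B, g y ∂ν := by
          rw [integral_add (integrable_const _) hg, setIntegral_const, smul_eq_mul]
  calc μ.real A * ν.real B = ∫ _ in A, ν.real B ∂μ := by simp
    _ ≤ ∫ x in A, (ν.real B * f x + ∫ y in B, g y ∂ν) ∂μ :=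
        setIntegral_mono_on integrableOn_const ((hf.const_mul _).add integrableOn_const) hA hx
    _ = ν.real B * ∫ x in A, f x ∂μ + μ.real A * ∫ y in B, g y ∂ν := by
        rw [integral_add (hf.const_mul _) (integrable_const _), integral_const_mul,
          setIntegral_const, smul_eq_mul]

theorem measure_inter_lt_eq_zero_or {F : X → ℝ} {G : Y → ℝ} (hF : Measurable F) (hG : Measurable G)
    (hFi : Integrable F μ) (hGi : Integrable G ν) (hA : MeasurableSet A) (hB : MeasurableSet B)
    (h : ∀ A' ⊆ A, ∀ B' ⊆ B, MeasurableSet A' → MeasurableSet B' →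
      μ.real A' * ν.real B' ≤ ν.real B' * ∫ x in A', F x ∂μ + μ.real A' * ∫ y in B', G y ∂ν)
    {q r : ℝ} (hqr : q + r < 1) : μ (A ∩ {x | F x < q}) = 0 ∨ ν (B ∩ {y | G y < r}) = 0 := by
  by_contra! hpos
  set A' := A ∩ {x | F x < q}
  set B' := B ∩ {y | G y < r}
  have hA' : MeasurableSet A' := hA.inter (hF measurableSet_Iio)
  have hB' : MeasurableSet B' := hB.inter (hG measurableSet_Iio)
  have ha : 0 < μ.real A' := ENNReal.toReal_pos hpos.1 (measure_ne_top μ _)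
  have hb : 0 < ν.real B' := ENNReal.toReal_pos hpos.2 (measure_ne_top ν _)
  have hFq : ∫ x in A', F x ∂μ ≤ μ.real A' * q :=
    (setIntegral_mono_on hFi.integrableOn integrableOn_const hA' fun x hx => hx.2.le).trans_eq
      (by rw [setIntegral_const, smul_eq_mul])
  have hGr : ∫ y in B', G y ∂ν ≤ ν.real B' * r :=
    (setIntegral_mono_on hGi.integrableOn integrableOn_const hB' fun y hy => hy.2.le).trans_eq
      (by rw [setIntegral_const, smul_eq_mul])
  have := h A' inter_subset_left B' inter_subset_left hA' hB'
  nlinarith [mul_le_mul_of_nonneg_left hFq hb.le, mul_le_mul_of_nonneg_left hGr ha.le,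
    mul_pos ha hb]

theorem exists_null_forall_le_add_of_le_setIntegral {F : X → ℝ} {G : Y → ℝ} (hF : Measurable F)
    (hG : Measurable G) (hFi : Integrable F μ) (hGi : Integrable G ν) (hA : MeasurableSet A)
    (hB : MeasurableSet B)
    (h : ∀ A' ⊆ A, ∀ B' ⊆ B, MeasurableSet A' → MeasurableSet B' →
      μ.real A' * ν.real B' ≤ ν.real B' * ∫ x in A', F x ∂μ + μ.real A' * ∫ y in B', G y ∂ν) :
    ∃ NX NY, MeasurableSet NX ∧ μ NX = 0 ∧ MeasurableSet NY ∧ ν NY = 0 ∧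
      ∀ x ∈ A \ NX, ∀ y ∈ B \ NY, 1 ≤ F x + G y := by
  refine ⟨⋃ (q : ℚ) (_ : μ (A ∩ {x | F x < q}) = 0), A ∩ {x | F x < q},
    ⋃ (r : ℚ) (_ : ν (B ∩ {y | G y < r}) = 0), B ∩ {y | G y < r},
    .iUnion fun q => .iUnion fun _ => hA.inter (hF measurableSet_Iio),
    measure_iUnion_null fun q => measure_iUnion_null id,
    .iUnion fun r => .iUnion fun _ => hB.inter (hG measurableSet_Iio),
    measure_iUnion_null fun r => measure_iUnion_null id, ?_⟩
  rintro x ⟨hxA, hxN⟩ y ⟨hyB, hyN⟩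
  by_contra! hlt
  obtain ⟨q, hFq, hq⟩ := exists_rat_btwn (lt_add_of_pos_right (F x) (half_pos (sub_pos.2 hlt)))
  obtain ⟨r, hGr, hr⟩ := exists_rat_btwn (lt_add_of_pos_right (G y) (half_pos (sub_pos.2 hlt)))
  rcases measure_inter_lt_eq_zero_or hF hG hFi hGi hA hB h (q := q) (r := r) (by linarith)
    with h0 | h0
  · exact hxN (mem_iUnion₂.2 ⟨q, h0, hxA, hFq⟩)
  · exact hyN (mem_iUnion₂.2 ⟨r, h0, hyB, hGr⟩)

end Rectangles

section CountableRectangles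

variable [MeasurableSpace X] [MeasurableSpace Y] {μ : Measure X} {ν : Measure Y}
  [IsProbabilityMeasure μ] [IsProbabilityMeasure ν] {J : Type*} [Countable J]
  {A : J → Set X} {B : J → Set Y}

theorem betaInf_indR_iUnion_le (hA : ∀ j, MeasurableSet (A j)) (hB : ∀ j, MeasurableSet (B j))
    {F : X → ℝ} {G : Y → ℝ} (hF : Measurable F) (hG : Measurable G)
    (hF01 : ∀ x, F x ∈ Icc (0 : ℝ) 1) (hG01 : ∀ y, G y ∈ Icc (0 : ℝ) 1)
    (hFG : ∀ j, ∃ NX NY, MeasurableSet NX ∧ μ NX = 0 ∧ MeasurableSet NY ∧ ν NY = 0 ∧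
      ∀ x ∈ A j \ NX, ∀ y ∈ B j \ NY, 1 ≤ F x + G y) :
    betaInf μ ν (indR (⋃ j, A j ×ˢ B j)) ≤ ∫ x, F x ∂μ + ∫ y, G y ∂ν := by
  classical
  choose NX NY hNX hNX0 hNY hNY0 hFG using hFG
  set f : X → ℝ := fun x => if x ∈ ⋃ j, NX j then 1 else F x
  set g : Y → ℝ := fun y => if y ∈ ⋃ j, NY j then 1 else G y
  have hf01 : ∀ x, f x ∈ Icc (0 : ℝ) 1 := fun x => by
    simp only [f]
    split_ifs
    exacts [⟨zero_le_one, le_rfl⟩, hF01 x]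
  have hg01 : ∀ y, g y ∈ Icc (0 : ℝ) 1 := fun y => by
    simp only [g]
    split_ifs
    exacts [⟨zero_le_one, le_rfl⟩, hG01 y]
  have hf : Measurable f := Measurable.ite (.iUnion hNX) measurable_const hF
  have hg : Measurable g := Measurable.ite (.iUnion hNY) measurable_const hG
  have hfF : f =ᵐ[μ] F := by
    filter_upwards [measure_eq_zero_iff_ae_notMem.1 (measure_iUnion_null hNX0)] with x hx
    simp only [f, if_neg hx]
  have hgG : g =ᵐ[ν] G := by
    filter_upwards [measure_eq_zero_iff_ae_notMem.1 (measure_iUnion_null hNY0)] with y hy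
    simp only [g, if_neg hy]
  have hfg : ∀ x y, indR (⋃ j, A j ×ˢ B j) (x, y) ≤ f x + g y := by
    intro x y
    by_cases hxy : (x, y) ∈ ⋃ j, A j ×ˢ B j
    · obtain ⟨j, hx, hy⟩ := mem_iUnion.1 hxy
      rw [indR, indicator_of_mem hxy]
      by_cases hxN : x ∈ ⋃ j, NX j
      · simp only [f, if_pos hxN]
        linarith [(hg01 y).1]
      by_cases hyN : y ∈ ⋃ j, NY j
      · simp only [g, if_pos hyN]
        linarith [(hf01 x).1]
      simp only [f, g, if_neg hxN, if_neg hyN]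
      exact hFG j x ⟨hx, fun h => hxN (mem_iUnion.2 ⟨j, h⟩)⟩
        y ⟨hy, fun h => hyN (mem_iUnion.2 ⟨j, h⟩)⟩
    · rw [indR, indicator_of_notMem hxy]
      exact add_nonneg (hf01 x).1 (hg01 y).1
  calc betaInf μ ν (indR (⋃ j, A j ×ˢ B j)) ≤ ∫ x, f x ∂μ + ∫ y, g y ∂ν :=
        betaInf_indR_le (.iUnion fun j => (hA j).prod (hB j)) (integrable_of_mem_Icc hf hf01)
          (integrable_of_mem_Icc hg hg01) hfg
    _ = ∫ x, F x ∂μ + ∫ y, G y ∂ν := by rw [integral_congr_ae hfF, integral_congr_ae hgG]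

theorem betaInf_indR_iUnion_le_of_tendsto (hA : ∀ j, MeasurableSet (A j))
    (hB : ∀ j, MeasurableSet (B j)) {f : ℕ → X → ℝ} {g : ℕ → Y → ℝ}
    (hf : ∀ n, Measurable (f n)) (hg : ∀ n, Measurable (g n))
    (hf01 : ∀ n x, f n x ∈ Icc (0 : ℝ) 1) (hg01 : ∀ n y, g n y ∈ Icc (0 : ℝ) 1)
    (hfg : ∀ j, ∀ᶠ n in atTop, ∀ x ∈ A j, ∀ y ∈ B j, 1 ≤ f n x + g n y)
    {c : ℝ} {ε : ℕ → ℝ} (hε : Tendsto ε atTop (𝓝 0))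
    (hcost : ∀ n, ∫ x, f n x ∂μ + ∫ y, g n y ∂ν ≤ c + ε n) :
    betaInf μ ν (indR (⋃ j, A j ×ˢ B j)) ≤ c := by
  set 𝒰 := Ultrafilter.of (atTop : Filter ℕ)
  have h𝒰 : (𝒰 : Filter ℕ) ≤ atTop := Ultrafilter.of_le _
  obtain ⟨F, hF, hF01, hFlim⟩ := exists_tendsto_setIntegral_of_ultrafilter (μ := μ) 𝒰 hf hf01
  obtain ⟨G, hG, hG01, hGlim⟩ := exists_tendsto_setIntegral_of_ultrafilter (μ := ν) 𝒰 hg hg01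
  have hcostFG : ∫ x, F x ∂μ + ∫ y, G y ∂ν ≤ c := by
    simpa using le_of_tendsto_of_tendsto ((hFlim univ .univ).add (hGlim univ .univ))
      ((tendsto_const_nhds.add hε).mono_left h𝒰) (.of_forall fun n => by simpa using hcost n)
  refine (betaInf_indR_iUnion_le hA hB hF hG hF01 hG01 fun j => ?_).trans hcostFG
  refine exists_null_forall_le_add_of_le_setIntegral hF hG (integrable_of_mem_Icc hF hF01)
    (integrable_of_mem_Icc hG hG01) (hA j) (hB j) fun A' hA' B' hB' hA'm hB'm => ?_
  refine le_of_tendsto_of_tendsto tendsto_const_nhds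
    (((hFlim A' hA'm).const_mul _).add ((hGlim B' hB'm).const_mul _))
    (((hfg j).filter_mono h𝒰).mono fun n hn => ?_)
  exact mul_le_setIntegral_add_setIntegral hA'm hB'm
    (integrable_of_mem_Icc (hf n) (hf01 n)).integrableOn
    (integrable_of_mem_Icc (hg n) (hg01 n)).integrableOn
    fun x hx y hy => hn x (hA' hx) y (hB' hy)

end CountableRectangles

theorem stmt6 [MeasurableSpace X] [MeasurableSpace Y]
    (μ : Measure X) (ν : Measure Y) [IsProbabilityMeasure μ] [IsProbabilityMeasure ν]
    (R : ℕ → Set (X × Y)) (hR : ∀ n, IsRectUnion (R n)) :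
    alphaSup μ ν (indR (⋃ n, R n)) = betaInf μ ν (indR (⋃ n, R n)) := by
  choose k A B hA hB hRAB using hR
  have hH : ⋃ n, R n = ⋃ j : Σ n, Fin (k n), A j.1 j.2 ×ˢ B j.1 j.2 := by
    simp only [hRAB, iUnion_sigma]
  have hHm : MeasurableSet (⋃ n, R n) := by
    rw [hH]
    exact .iUnion fun j => (hA _ _).prod (hB _ _)
  have hsub : ∀ N, ⋃ j : Σ n : Fin N, Fin (k n), A j.1 j.2 ×ˢ B j.1 j.2 ⊆ ⋃ n, R n := by
    rw [hH]
    exact fun N => iUnion_subset fun j => subset_iUnion_of_subset ⟨j.1, j.2⟩ subset_rfl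
  refine le_antisymm (alphaSup_indR_le_betaInf hHm) ?_
  choose f g hf hg hf01 hg01 hfg hcost using fun N : ℕ =>
    exists_dual_Icc_le_alphaSup μ ν (fun j : Σ n : Fin N, Fin (k n) => hA j.1 j.2)
      (fun j => hB j.1 j.2) hHm (hsub N) Nat.one_div_pos_of_nat
  rw [hH] at hcost ⊢
  refine betaInf_indR_iUnion_le_of_tendsto (fun j : Σ n, Fin (k n) => hA j.1 j.2)
    (fun j => hB j.1 j.2) hf hg hf01 hg01 (fun j => ?_) tendsto_one_div_add_atTop_nhds_zero_nat
    hcost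
  filter_upwards [eventually_gt_atTop j.1] with N hN
  exact hfg N ⟨⟨j.1, hN⟩, j.2⟩
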